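/- arXiv:2311.03685 — 3 statements merged into one kernel-verified Lean document; each statement's English description precedes it below -/
import Mathlib

section
/- Let f be a nonnegative submodular function on V, let k ∈ ℕ, τ > 0, and let S* ⊆ V with |S*| ≤ k and f(S*) = OPT. Let S₁, S₂ ⊆ V be disjoint sets such that: (i) for every v ∈ V \ S₁, f(S₁ ∪ {v}) − f(S₁) < τ; (ii) for every v ∈ (V \ S₁) \ S₂, f(S₂ ∪ {v}) − f(S₂) < τ; and (iii) f(S₁ ∩ S*) < (τk)/(2α) for some α > 0. Then f(S₁) + f(S₂) ≥ OPT − (2 + 1/(2α)) · τ · k. -/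
/-!
Put `A = S₁ ∪ S*` and `B = S₂ ∪ (S* \ S₁)`. Since every element of `S*` (resp. `S* \ S₁`)
outside `S₁` (resp. `S₂`) has marginal gain below `τ`, submodularity gives
`f A ≤ f S₁ + τ k` and `f B ≤ f S₂ + τ k`. Disjointness of `S₁` and `S₂` makes
`A ∩ B = S* \ S₁`, so submodularity and nonnegativity give `f (S* \ S₁) ≤ f A + f B`, while
`OPT = f S* ≤ f (S* \ S₁) + f (S₁ ∩ S*)`, and the last term is small by hypothesis.
-/

open Finset

section Submodular

variable {V : Type*} [DecidableEq V] (f : Finset V → ℝ)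
  (hsub : ∀ A B : Finset V, f (A ∪ B) + f (A ∩ B) ≤ f A + f B)
include hsub

theorem le_add_sum_marginal (S T : Finset V) :
    f (S ∪ T) ≤ f S + ∑ v ∈ T \ S, (f (S ∪ {v}) - f S) := by
  induction T using Finset.induction with
  | empty => simp
  | @insert a T haT ih =>
    by_cases haS : a ∈ S
    · rwa [union_insert, insert_eq_of_mem (mem_union_left T haS), insert_sdiff_of_mem T haS]
    · have hunion : (S ∪ T) ∪ (S ∪ {a}) = S ∪ insert a T := by grind
      have hinter : (S ∪ T) ∩ (S ∪ {a}) = S := by grind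
      have := hsub (S ∪ T) (S ∪ {a})
      rw [hunion, hinter] at this
      rw [insert_sdiff_of_notMem _ haS, sum_insert (by simp [haT])]
      linarith

theorem le_add_mul_of_marginal_le {S T : Finset V} {τ : ℝ} {k : ℕ} (hτ : 0 ≤ τ)
    (hT : #T ≤ k) (hmarg : ∀ v ∈ T, v ∉ S → f (S ∪ {v}) - f S ≤ τ) :
    f (S ∪ T) ≤ f S + τ * k := by
  have hsum : ∑ v ∈ T \ S, (f (S ∪ {v}) - f S) ≤ #(T \ S) • τ :=
    sum_le_card_nsmul _ _ τ fun v hv => hmarg v (mem_sdiff.1 hv).1 (mem_sdiff.1 hv).2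
  have hcard : (#(T \ S) : ℝ) ≤ k := by exact_mod_cast (card_le_card sdiff_subset).trans hT
  rw [nsmul_eq_mul] at hsum
  nlinarith [le_add_sum_marginal f hsub S T]

theorem le_sdiff_add_inter (h₀ : 0 ≤ f ∅) (S T : Finset V) :
    f T ≤ f (T \ S) + f (T ∩ S) := by
  have := hsub (T \ S) (T ∩ S)
  rw [sdiff_union_inter, inter_comm T S, ← inter_assoc, sdiff_inter_self, empty_inter,
    inter_comm] at this
  linarith

end Submodular

theorem union_inter_union_sdiff {V : Type*} [DecidableEq V] {S₁ S₂ : Finset V}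
    (hdisj : Disjoint S₁ S₂) (T : Finset V) :
    (S₁ ∪ T) ∩ (S₂ ∪ (T \ S₁)) = T \ S₁ := by
  have := disjoint_left.1 hdisj
  grind

theorem two_threshold_sets_bound_general
    {V : Type*} [DecidableEq V] (f : Finset V → ℝ)
    (hnn : ∀ A : Finset V, 0 ≤ f A)
    (hsub : ∀ A B : Finset V, f (A ∪ B) + f (A ∩ B) ≤ f A + f B)
    (k : ℕ) (τ α : ℝ) (hτ : 0 < τ)
    (Sstar : Finset V) (hcard : Sstar.card ≤ k)
    (OPT : ℝ) (hOPT : f Sstar = OPT)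
    (S₁ S₂ : Finset V) (hdisj : Disjoint S₁ S₂)
    (h1 : ∀ v : V, v ∉ S₁ → f (S₁ ∪ {v}) - f S₁ < τ)
    (h2 : ∀ v : V, v ∉ S₁ → v ∉ S₂ → f (S₂ ∪ {v}) - f S₂ < τ)
    (h3 : f (S₁ ∩ Sstar) < τ * k / (2 * α)) :
    f S₁ + f S₂ ≥ OPT - (2 + 1 / (2 * α)) * τ * k := by
  have hA : f (S₁ ∪ Sstar) ≤ f S₁ + τ * k :=
    le_add_mul_of_marginal_le f hsub hτ.le hcard fun v _ hv => (h1 v hv).le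
  have hB : f (S₂ ∪ (Sstar \ S₁)) ≤ f S₂ + τ * k :=
    le_add_mul_of_marginal_le f hsub hτ.le ((card_le_card sdiff_subset).trans hcard)
      fun v hv hv₂ => (h2 v (mem_sdiff.1 hv).2 hv₂).le
  have hAB : f (Sstar \ S₁) ≤ f (S₁ ∪ Sstar) + f (S₂ ∪ (Sstar \ S₁)) := by
    have := hsub (S₁ ∪ Sstar) (S₂ ∪ (Sstar \ S₁))
    rw [union_inter_union_sdiff hdisj] at this
    linarith [hnn ((S₁ ∪ Sstar) ∪ (S₂ ∪ (Sstar \ S₁)))]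
  have hOPT_le : OPT ≤ f (Sstar \ S₁) + f (S₁ ∩ Sstar) := by
    rw [← hOPT, inter_comm]
    exact le_sdiff_add_inter f hsub (hnn ∅) S₁ Sstar
  have hsmall : τ * k / (2 * α) = 1 / (2 * α) * τ * k := by ring
  linarith

theorem two_threshold_sets_bound
    {V : Type*} [Fintype V] [DecidableEq V] (f : Finset V → ℝ)
    (hnn : ∀ A : Finset V, 0 ≤ f A)
    (hsub : ∀ A B : Finset V, f (A ∪ B) + f (A ∩ B) ≤ f A + f B)
    (k : ℕ) (τ α : ℝ) (hτ : 0 < τ) (hα : 0 < α)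
    (Sstar : Finset V) (hcard : Sstar.card ≤ k)
    (OPT : ℝ) (hOPT : f Sstar = OPT)
    (S₁ S₂ : Finset V) (hdisj : Disjoint S₁ S₂)
    (h1 : ∀ v : V, v ∉ S₁ → f (S₁ ∪ {v}) - f S₁ < τ)
    (h2 : ∀ v : V, v ∉ S₁ → v ∉ S₂ → f (S₂ ∪ {v}) - f S₂ < τ)
    (h3 : f (S₁ ∩ Sstar) < τ * k / (2 * α)) :
    f S₁ + f S₂ ≥ OPT - (2 + 1 / (2 * α)) * τ * k :=
  two_threshold_sets_bound_general f hnn hsub k τ α hτ Sstar hcard OPT hOPT S₁ S₂ hdisj h1 h2 h3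
end

section
/- Let f be submodular on V and let τ > 0. If S ⊆ V satisfies |S| < k and Δ(v|S) < τ for all v ∈ V \ S, then for any S* ⊆ V with |S*| ≤ k, f(S) ≥ f(S ∪ S*) − τ·k. -/
theorem threshold_set_vs_opt
    {V : Type*} [Fintype V] [DecidableEq V] (f : Finset V → ℝ)
    (hsub : ∀ A B : Finset V, f (A ∪ B) + f (A ∩ B) ≤ f A + f B)
    (k : ℕ) (τ : ℝ) (hτ : 0 < τ) (S : Finset V) (hSk : S.card < k)
    (hS : ∀ v : V, v ∉ S → f (S ∪ {v}) - f S < τ) :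
    ∀ Sstar : Finset V, Sstar.card ≤ k → f S ≥ f (S ∪ Sstar) - τ * k := by
  intro T hT
  have key : ∀ T : Finset V, f (S ∪ T) - f S ≤ ∑ v ∈ T, (f (S ∪ {v}) - f S) := by
    intro T
    induction T using Finset.induction with
    | empty => simp
    | @insert a T ha ih =>
      have hsub' := hsub (S ∪ T) (S ∪ {a})
      have hunion : (S ∪ T) ∪ (S ∪ {a}) = S ∪ insert a T := by
        ext x; simp [or_comm, or_assoc, or_left_comm]
      have hinter : (S ∪ T) ∩ (S ∪ {a}) = S := by
        ext x
        simp only [Finset.mem_inter, Finset.mem_union, Finset.mem_singleton]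
        constructor
        · rintro ⟨h1 | h1, h2 | rfl⟩ <;> first | assumption | exact absurd h1 ha
        · intro h; exact ⟨Or.inl h, Or.inl h⟩
      rw [hunion, hinter] at hsub'
      rw [Finset.sum_insert ha]
      linarith
  have hbound : ∑ v ∈ T, (f (S ∪ {v}) - f S) ≤ τ * T.card := by
    rw [mul_comm, ← nsmul_eq_mul]
    apply Finset.sum_le_card_nsmul
    intro v _
    by_cases hv : v ∈ S
    · have : S ∪ {v} = S := by
        ext x; simp; rintro rfl; exact hv
      rw [this]; simpa using hτ.le
    · exact (hS v hv).le
  have : (T.card : ℝ) ≤ k := by exact_mod_cast hT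
  have := key T
  nlinarith
end

section
/- Let f be a nonnegative submodular function on a finite set S₁, and let T be a random subset of S₁ formed by including each element independently with probability 1/2. Then E[f(T)] ≥ (1/4) · max_{C ⊆ S₁} f(C). -/
lemma fmv_pointwise {V : Type*} [DecidableEq V] (S₁ : Finset V) (f : Finset V → ℝ)
    (hnn : ∀ A : Finset V, A ⊆ S₁ → 0 ≤ f A)
    (hsub : ∀ A B : Finset V, A ⊆ S₁ → B ⊆ S₁ →
      f (A ∪ B) + f (A ∩ B) ≤ f A + f B)
    (C T : Finset V) (hC : C ⊆ S₁) (hT : T ⊆ S₁) :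
    f C ≤ f T + f (symmDiff T C) + f (symmDiff T (S₁ \ C)) + f (S₁ \ T) := by
  set D := S₁ \ C with hD
  have hTC : symmDiff T C ⊆ S₁ := by
    intro x hx; rw [Finset.mem_symmDiff] at hx
    rcases hx with ⟨h, _⟩ | ⟨h, _⟩; exact hT h; exact hC h
  have hTD : symmDiff T D ⊆ S₁ := by
    intro x hx; rw [Finset.mem_symmDiff] at hx
    rcases hx with ⟨h, _⟩ | ⟨h, _⟩; exact hT h; exact (Finset.sdiff_subset) h
  have hST : S₁ \ T ⊆ S₁ := Finset.sdiff_subset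
  have hTCu : T ∪ C ⊆ S₁ := Finset.union_subset hT hC
  have hCDu : C ∪ (D \ T) ⊆ S₁ :=
    Finset.union_subset hC ((Finset.sdiff_subset).trans Finset.sdiff_subset)
  have e1 : T ∪ (symmDiff T C) = T ∪ C := by
    ext x; simp [Finset.mem_symmDiff]; tauto
  have e2 : T ∩ (symmDiff T C) = T \ C := by
    ext x; simp [Finset.mem_symmDiff]; tauto
  have e3 : (symmDiff T D) ∪ (S₁ \ T) = C ∪ (D \ T) := by
    ext x
    have h1 : x ∈ T → x ∈ S₁ := fun h => hT h
    have h2 : x ∈ C → x ∈ S₁ := fun h => hC h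
    simp [hD, Finset.mem_symmDiff]; tauto
  have e4 : (symmDiff T D) ∩ (S₁ \ T) = D \ T := by
    ext x
    have h1 : x ∈ T → x ∈ S₁ := fun h => hT h
    simp [hD, Finset.mem_symmDiff]; tauto
  have e5 : (T ∪ C) ∪ (C ∪ (D \ T)) = S₁ := by
    ext x
    have h1 : x ∈ T → x ∈ S₁ := fun h => hT h
    have h2 : x ∈ C → x ∈ S₁ := fun h => hC h
    simp [hD]; tauto
  have e6 : (T ∪ C) ∩ (C ∪ (D \ T)) = C := by
    ext x
    have h1 : x ∈ T → x ∈ S₁ := fun h => hT h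
    have h2 : x ∈ C → x ∈ S₁ := fun h => hC h
    simp [hD]; tauto
  have h1 := hsub T (symmDiff T C) hT hTC
  rw [e1, e2] at h1
  have h2 := hsub (symmDiff T D) (S₁ \ T) hTD hST
  rw [e3, e4] at h2
  have h3 := hsub (T ∪ C) (C ∪ (D \ T)) hTCu hCDu
  rw [e5, e6] at h3
  have n1 := hnn S₁ (subset_refl _)
  have n2 := hnn (T \ C) ((Finset.sdiff_subset).trans hT)
  have n3 := hnn (D \ T) ((Finset.sdiff_subset).trans Finset.sdiff_subset)
  linarith

theorem random_subset_quarter_approximation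
    {V : Type*} [DecidableEq V] (S₁ : Finset V) (f : Finset V → ℝ)
    (hnn : ∀ A : Finset V, A ⊆ S₁ → 0 ≤ f A)
    (hsub : ∀ A B : Finset V, A ⊆ S₁ → B ⊆ S₁ →
      f (A ∪ B) + f (A ∩ B) ≤ f A + f B) :
    (1 / 2 ^ S₁.card : ℝ) * ∑ T ∈ S₁.powerset, f T ≥
      (1 / 4 : ℝ) * S₁.powerset.sup' ⟨∅, Finset.empty_mem_powerset S₁⟩ f := by
  obtain ⟨C, hCmem, hCeq⟩ :=
    Finset.exists_mem_eq_sup' (⟨∅, Finset.empty_mem_powerset S₁⟩ :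
      S₁.powerset.Nonempty) f
  rw [hCeq]
  have hC : C ⊆ S₁ := Finset.mem_powerset.mp hCmem
  set P := S₁.powerset with hP
  set S : ℝ := ∑ T ∈ P, f T with hS
  -- reindexing sums
  have r1 : ∀ (E : Finset V), E ⊆ S₁ → ∑ T ∈ P, f (symmDiff T E) = S := by
    intro E hE
    refine Finset.sum_nbij' (fun T => symmDiff T E) (fun T => symmDiff T E) ?_ ?_ ?_ ?_ ?_
    · intro a ha
      rw [Finset.mem_powerset] at ha ⊢
      intro x hx; rw [Finset.mem_symmDiff] at hx
      rcases hx with ⟨h, _⟩ | ⟨h, _⟩; exact ha h; exact hE h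
    · intro a ha
      rw [Finset.mem_powerset] at ha ⊢
      intro x hx; rw [Finset.mem_symmDiff] at hx
      rcases hx with ⟨h, _⟩ | ⟨h, _⟩; exact ha h; exact hE h
    · intro a _; exact symmDiff_symmDiff_cancel_right E a
    · intro a _; exact symmDiff_symmDiff_cancel_right E a
    · intro a _; rfl
  have r2 : ∑ T ∈ P, f (S₁ \ T) = S := by
    refine Finset.sum_nbij' (fun T => S₁ \ T) (fun T => S₁ \ T) ?_ ?_ ?_ ?_ ?_
    · intro a _; exact Finset.mem_powerset.mpr Finset.sdiff_subset
    · intro a _; exact Finset.mem_powerset.mpr Finset.sdiff_subset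
    · intro a ha; exact Finset.sdiff_sdiff_eq_self (Finset.mem_powerset.mp ha)
    · intro a ha; exact Finset.sdiff_sdiff_eq_self (Finset.mem_powerset.mp ha)
    · intro a _; rfl
  have hkey : (2 ^ S₁.card : ℝ) * f C ≤ 4 * S := by
    have hst := Finset.sum_le_sum (s := P)
      (f := fun _ => f C)
      (g := fun T => f T + f (symmDiff T C) + f (symmDiff T (S₁ \ C)) + f (S₁ \ T)) ?_
    · have hl : ∑ _T ∈ P, f C = (2 ^ S₁.card : ℝ) * f C := by
        rw [Finset.sum_const, Finset.card_powerset, nsmul_eq_mul]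
        push_cast; ring
      have hr : ∑ T ∈ P, (f T + f (symmDiff T C) + f (symmDiff T (S₁ \ C)) + f (S₁ \ T))
          = 4 * S := by
        rw [Finset.sum_add_distrib, Finset.sum_add_distrib, Finset.sum_add_distrib,
          r1 C hC, r1 (S₁ \ C) Finset.sdiff_subset, r2]
        ring
      rw [hl, hr] at hst
      exact hst
    · intro T hT
      exact fmv_pointwise S₁ f hnn hsub C T hC (Finset.mem_powerset.mp hT)
  have h2n : (0:ℝ) < 2 ^ S₁.card := by positivity
  rw [ge_iff_le]
  rw [div_mul_eq_mul_div, div_mul_eq_mul_div, le_div_iff₀ h2n, div_mul_eq_mul_div,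
    div_le_iff₀ (by norm_num : (0:ℝ) < 4)]
  nlinarith [hkey]
end
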